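/- arXiv:1002.0929 — 2 statements merged into one kernel-verified Lean document; each statement's English description precedes it below -/
import Mathlib

section
/- Let R be a commutative ring with identity, n ≥ 2, V̄ a free R-module with basis e_1,…,e_n. Then the intersection γ_n ∩ L_n(V̄) equals the image β_n(γ_n) of γ_n under the map β_n. Consequently Lie(n) := γ_n ∩ L_n(V̄) is simultaneously an R(Σ_n)-submodule of γ_n and, via the surjection β_n : γ_n → Lie(n), a quotient R(Σ_n)-module of γ_n. -/
open scoped TensorProduct
open PiTensorProduct

noncomputable section

universe u

variable (R : Type u) [CommRing R]

/-- The operator on the `n`-th tensor power of `V` permuting the tensor positions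
according to `σ`. -/
def pact (V : Type u) [AddCommGroup V] [Module R V] (n : ℕ) (σ : Equiv.Perm (Fin n)) :
    (⨂[R]^n V) →ₗ[R] (⨂[R]^n V) :=
  (PiTensorProduct.reindex R (fun _ : Fin n => V) σ).toLinearMap

/-- The functorial action of a linear map on the `n`-th tensor power. -/
def tmap {V W : Type u} [AddCommGroup V] [Module R V] [AddCommGroup W] [Module R W]
    (n : ℕ) (f : V →ₗ[R] W) : (⨂[R]^n V) →ₗ[R] (⨂[R]^n W) :=
  PiTensorProduct.map fun _ => f

/-- Auxiliary operators: `betaAux R V n c k` is the operator on `V^{⊗n}` which applies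
the (signed, with signs `c`) left-normed bracketing to the first `k+1` tensor factors. -/
def betaAux (V : Type u) [AddCommGroup V] [Module R V] (n : ℕ) (c : ℕ → R) :
    ℕ → ((⨂[R]^n V) →ₗ[R] (⨂[R]^n V))
  | 0 => LinearMap.id
  | k + 1 =>
    if h : k + 1 < n then
      (LinearMap.id - c (k + 1) • pact R V n (Fin.cycleRange ⟨k + 1, h⟩)) ∘ₗ
        betaAux V n c k
    else betaAux V n c k

/-- `β_n : V^{⊗n} → V^{⊗n}`, the linear map sending `a₁ ⊗ ⋯ ⊗ a_n` to the left-normed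
iterated commutator `[[a₁,a₂],…,a_n]` (with `[a,b] = ab - ba`), regarded inside `V^{⊗n}`. -/
def beta (V : Type u) [AddCommGroup V] [Module R V] (n : ℕ) :
    (⨂[R]^n V) →ₗ[R] (⨂[R]^n V) :=
  betaAux R V n (fun _ => 1) (n - 1)

/-- `L_n(V) = Im(β_n) ⊆ V^{⊗n}`. -/
def Lsub (V : Type u) [AddCommGroup V] [Module R V] (n : ℕ) : Submodule R (⨂[R]^n V) :=
  LinearMap.range (beta R V n)

variable {n : ℕ} {A : Type u} [AddCommGroup A] [Module R A]

/-- Given a basis `e` of the free module `V̄`, the word `e_{σ(1)} ⊗ ⋯ ⊗ e_{σ(n)}`. -/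
def eword (b : Module.Basis (Fin n) R A) (σ : Equiv.Perm (Fin n)) : ⨂[R]^n A :=
  tprod R fun i => b (σ i)

/-- `γ_n ⊆ V̄^{⊗n}`, the span of the words `e_{σ(1)} ⊗ ⋯ ⊗ e_{σ(n)}` for `σ ∈ Σ_n`. -/
def gammaN (b : Module.Basis (Fin n) R A) : Submodule R (⨂[R]^n A) :=
  Submodule.span R (Set.range (eword R b))

/-- The action of `σ ∈ Σ_n` on `V̄^{⊗n}` by permuting the letters `e_1, …, e_n`,
induced by the linear automorphism `e_i ↦ e_{σ(i)}` of `V̄`. -/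
def lact (b : Module.Basis (Fin n) R A) (σ : Equiv.Perm (Fin n)) :
    (⨂[R]^n A) →ₗ[R] (⨂[R]^n A) :=
  tmap R n (b.equiv b (σ : Fin n ≃ Fin n)).toLinearMap

/-- `Lie(n) = γ_n ∩ L_n(V̄)`. -/
def LieN (b : Module.Basis (Fin n) R A) : Submodule R (⨂[R]^n A) :=
  gammaN R b ⊓ Lsub R A n

/-- The coordinate functional on `V̄^{⊗n}` dual to the word `e_{w(1)} ⊗ ⋯ ⊗ e_{w(n)}`. -/
def lamb (b : Module.Basis (Fin n) R A) (w : Fin n → Fin n) : (⨂[R]^n A) →ₗ[R] R :=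
  PiTensorProduct.lift
    ((MultilinearMap.mkPiAlgebra R (Fin n) R).compLinearMap fun i => b.coord (w i))

/-- The substitution pairing `γ_n ⊗ V^{⊗n} → V^{⊗n}` (extended by zero off `γ_n`):
`(e_{σ(1)} ⊗ ⋯ ⊗ e_{σ(n)}) ⊗ (x_1 ⊗ ⋯ ⊗ x_n) ↦ x_{σ(1)} ⊗ ⋯ ⊗ x_{σ(n)}`,
realizing the canonical identification `γ_n ⊗_{R(Σ_n)} V^{⊗n} ≅ V^{⊗n}`. -/
def cpair (b : Module.Basis (Fin n) R A) (V : Type u) [AddCommGroup V] [Module R V] :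
    (⨂[R]^n A) →ₗ[R] (⨂[R]^n V) →ₗ[R] (⨂[R]^n V) :=
  ∑ σ : Equiv.Perm (Fin n), (lamb R b ⇑σ).smulRight (pact R V n σ⁻¹)

/-- The submodule of balancing relations defining `M ⊗_{R(Σ_n)} V^{⊗n}` for a
`Σ_n`-invariant submodule `M` of `V̄^{⊗n}` (where the right `R(Σ_n)`-module structure
on `M` is the letter action composed with inversion). -/
def relSpan (b : Module.Basis (Fin n) R A) (M : Submodule R (⨂[R]^n A))
    (V : Type u) [AddCommGroup V] [Module R V] :
    Submodule R (↥M ⊗[R] (⨂[R]^n V)) :=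
  Submodule.span R
    {z | ∃ (σ : Equiv.Perm (Fin n)) (q : M) (h : lact R b σ ↑q ∈ M) (x : ⨂[R]^n V),
      z = (⟨lact R b σ ↑q, h⟩ : M) ⊗ₜ[R] x - (q : ↥M) ⊗ₜ[R] (pact R V n σ⁻¹ x)}


/-!
The coordinate projection `P` of `V̄^{⊗n}` onto `γ_n`, which keeps the words
`e_{σ(1)} ⊗ ⋯ ⊗ e_{σ(n)}` and kills every other basis word, commutes with all position
permutations, hence with `β_n`, which is a polynomial in them. So for `x = β_n y ∈ γ_n` we get
`x = P x = β_n (P y) ∈ β_n(γ_n)`, and `β_n(γ_n) ⊆ γ_n` likewise. The letter action also commutes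
with position permutations, which gives its equivariance and the stability of `Lie(n)`.
-/

section Commute

variable {R : Type u} [CommRing R] {n : ℕ} {V : Type u} [AddCommGroup V] [Module R V]

lemma pact_tprod (σ : Equiv.Perm (Fin n)) (f : Fin n → V) :
    pact R V n σ (tprod R f) = tprod R fun i => f (σ⁻¹ i) := by
  simp [pact, PiTensorProduct.reindex_tprod]

lemma commute_betaAux {Q : Module.End R (⨂[R]^n V)}
    (hQ : ∀ ρ : Equiv.Perm (Fin n), Commute Q (pact R V n ρ)) (c : ℕ → R) (k : ℕ) :
    Commute Q (betaAux R V n c k) := by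
  induction k with
  | zero => exact Commute.one_right Q
  | succ k ih =>
    rw [betaAux]
    split
    · exact ((Commute.one_right Q).sub_right ((hQ _).smul_right _)).mul_right ih
    · exact ih

lemma commute_beta {Q : Module.End R (⨂[R]^n V)}
    (hQ : ∀ ρ : Equiv.Perm (Fin n), Commute Q (pact R V n ρ)) :
    Commute Q (beta R V n) :=
  commute_betaAux hQ _ _

end Commute

section Submodule

variable {R M : Type*} [CommRing R] [AddCommGroup M] [Module R M]

lemma inf_range_eq_map_of_commute {M₀ : Submodule R M} {P f : Module.End R M}
    (hP : ∀ x, P x ∈ M₀) (hP_fix : ∀ x ∈ M₀, P x = x) (hPf : Commute P f) :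
    M₀ ⊓ LinearMap.range f = M₀.map f := by
  have hPf' : ∀ y, P (f y) = f (P y) := LinearMap.congr_fun hPf
  apply le_antisymm
  · rintro x ⟨hx, y, rfl⟩
    exact ⟨P y, hP y, by rw [← hPf', hP_fix _ hx]⟩
  · rintro _ ⟨y, hy, rfl⟩
    refine ⟨?_, y, rfl⟩
    rw [← hP_fix y hy, ← hPf']
    exact hP _

lemma map_inf_range_le_of_commute {M₀ : Submodule R M} {g f : Module.End R M}
    (hg : M₀.map g ≤ M₀) (hgf : Commute g f) :
    (M₀ ⊓ LinearMap.range f).map g ≤ M₀ ⊓ LinearMap.range f := by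
  rintro _ ⟨_, ⟨hx, z, rfl⟩, rfl⟩
  exact ⟨hg ⟨_, hx, rfl⟩, g z, (LinearMap.congr_fun hgf z).symm⟩

end Submodule

section Basis

variable {R : Type u} [CommRing R] {n : ℕ} {A : Type u} [AddCommGroup A] [Module R A]
  (b : Module.Basis (Fin n) R A)

lemma lamb_tprod (w : Fin n → Fin n) (f : Fin n → A) :
    lamb R b w (tprod R f) = ∏ i, b.coord (w i) (f i) := by
  simp [lamb]

lemma lamb_tprod_basis (w v : Fin n → Fin n) :
    lamb R b w (tprod R fun i => b (v i)) = if w = v then 1 else 0 := by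
  rw [lamb_tprod]
  split_ifs with h
  · subst h
    simp [Module.Basis.coord_apply, Module.Basis.repr_self]
  · obtain ⟨i, hi⟩ := Function.ne_iff.mp h
    refine Finset.prod_eq_zero (Finset.mem_univ i) ?_
    simp [Module.Basis.coord_apply, Module.Basis.repr_self, hi]

lemma lamb_eword (σ τ : Equiv.Perm (Fin n)) :
    lamb R b ⇑σ (eword R b τ) = if σ = τ then 1 else 0 := by
  rw [eword, lamb_tprod_basis]
  simp [DFunLike.coe_fn_eq]

lemma lamb_pact (σ ρ : Equiv.Perm (Fin n)) (x : ⨂[R]^n A) :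
    lamb R b ⇑σ (pact R A n ρ x) = lamb R b ⇑(σ * ρ) x := by
  have : lamb R b ⇑σ ∘ₗ pact R A n ρ = lamb R b ⇑(σ * ρ) := by
    ext f
    simp only [LinearMap.compMultilinearMap_apply, LinearMap.coe_comp, Function.comp_apply,
      pact_tprod, lamb_tprod]
    exact (Fintype.prod_equiv ρ _ _ fun i => by simp [Equiv.Perm.mul_apply]).symm
  exact LinearMap.congr_fun this x

lemma pact_eword (ρ σ : Equiv.Perm (Fin n)) :
    pact R A n ρ (eword R b σ) = eword R b (σ * ρ⁻¹) := by
  rw [eword, pact_tprod]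
  rfl

lemma lact_eword (σ τ : Equiv.Perm (Fin n)) :
    lact R b σ (eword R b τ) = eword R b (σ * τ) := by
  simp only [lact, tmap, eword, PiTensorProduct.map_tprod, LinearEquiv.coe_coe,
    Module.Basis.equiv_apply]
  rfl

lemma map_lact_gammaN_le (σ : Equiv.Perm (Fin n)) :
    (gammaN R b).map (lact R b σ) ≤ gammaN R b := by
  rw [gammaN, Submodule.map_span, Submodule.span_le]
  rintro _ ⟨_, ⟨τ, rfl⟩, rfl⟩
  exact Submodule.subset_span ⟨σ * τ, (lact_eword b σ τ).symm⟩

lemma commute_lact_pact (σ ρ : Equiv.Perm (Fin n)) :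
    Commute (lact R b σ) (pact R A n ρ) := by
  refine PiTensorProduct.ext (MultilinearMap.ext fun f => ?_)
  simp only [LinearMap.compMultilinearMap_apply, Module.End.mul_apply, lact, tmap, pact_tprod,
    PiTensorProduct.map_tprod]

def projGamma : Module.End R (⨂[R]^n A) :=
  ∑ σ : Equiv.Perm (Fin n), (lamb R b ⇑σ).smulRight (eword R b σ)

lemma projGamma_apply (x : ⨂[R]^n A) :
    projGamma b x = ∑ σ : Equiv.Perm (Fin n), lamb R b ⇑σ x • eword R b σ := by
  simp [projGamma]

lemma projGamma_mem_gammaN (x : ⨂[R]^n A) : projGamma b x ∈ gammaN R b := by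
  rw [projGamma_apply]
  exact Submodule.sum_mem _ fun σ _ => Submodule.smul_mem _ _ (Submodule.subset_span ⟨σ, rfl⟩)

lemma projGamma_eword (τ : Equiv.Perm (Fin n)) : projGamma b (eword R b τ) = eword R b τ := by
  simp only [projGamma_apply, lamb_eword, ite_smul, one_smul, zero_smul, Finset.sum_ite_eq',
    Finset.mem_univ, if_true]

lemma projGamma_of_mem_gammaN {x : ⨂[R]^n A} (hx : x ∈ gammaN R b) : projGamma b x = x := by
  induction hx using Submodule.span_induction with
  | mem x hx => obtain ⟨σ, rfl⟩ := hx; exact projGamma_eword b σ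
  | zero => exact map_zero _
  | add x y _ _ hx hy => rw [map_add, hx, hy]
  | smul c x _ hx => rw [map_smul, hx]

lemma commute_projGamma_pact (ρ : Equiv.Perm (Fin n)) :
    Commute (projGamma b) (pact R A n ρ) := by
  refine LinearMap.ext fun x => ?_
  simp only [Module.End.mul_apply, projGamma_apply, map_sum, map_smul, lamb_pact, pact_eword]
  exact Fintype.sum_equiv (Equiv.mulRight ρ) _ _ fun σ => by simp [mul_assoc]

end Basis

theorem statement0_general (R : Type u) [CommRing R] (n : ℕ)
    (A : Type u) [AddCommGroup A] [Module R A] (b : Module.Basis (Fin n) R A) :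
    LieN R b = Submodule.map (beta R A n) (gammaN R b) ∧
    (∀ σ : Equiv.Perm (Fin n), Submodule.map (lact R b σ) (LieN R b) ≤ LieN R b) ∧
    (∀ (σ : Equiv.Perm (Fin n)) (x : ⨂[R]^n A), x ∈ gammaN R b →
      beta R A n (lact R b σ x) = lact R b σ (beta R A n x)) := by
  have hlact (σ : Equiv.Perm (Fin n)) : Commute (lact R b σ) (beta R A n) :=
    commute_beta (commute_lact_pact b σ)
  refine ⟨?_, fun σ => ?_, fun σ x _ => (LinearMap.congr_fun (hlact σ) x).symm⟩
  · exact inf_range_eq_map_of_commute (projGamma_mem_gammaN b) (fun _ => projGamma_of_mem_gammaN b)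
      (commute_beta (commute_projGamma_pact b))
  · exact map_inf_range_le_of_commute (map_lact_gammaN_le b σ) (hlact σ)

/-- Let `R` be a commutative ring, `n ≥ 2`, and `V̄` a free `R`-module with
basis `e_1, …, e_n`.  Then `Lie(n) = γ_n ∩ L_n(V̄)` equals the image `β_n(γ_n)`; moreover
`Lie(n)` is an `R(Σ_n)`-submodule of `γ_n` (it is stable under the letter-permutation action),
and via the (equivariant) surjection `β_n : γ_n → Lie(n)` it is a quotient
`R(Σ_n)`-module of `γ_n`. -/
theorem statement0 (R : Type u) [CommRing R] (n : ℕ) (hn : 2 ≤ n)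
    (A : Type u) [AddCommGroup A] [Module R A] (b : Module.Basis (Fin n) R A) :
    LieN R b = Submodule.map (beta R A n) (gammaN R b) ∧
    (∀ σ : Equiv.Perm (Fin n), Submodule.map (lact R b σ) (LieN R b) ≤ LieN R b) ∧
    (∀ (σ : Equiv.Perm (Fin n)) (x : ⨂[R]^n A), x ∈ gammaN R b →
      beta R A n (lact R b σ x) = lact R b σ (beta R A n x)) :=
  statement0_general R n A b

end
end

section
/- Let R be a commutative ring with identity and let n, m ≥ 1. If n ≠ m, then every natural transformation with R-linear components from the functor T_n : V ↦ V^{⊗n} to the functor T_m : V ↦ V^{⊗m} is zero, i.e., Hom(T_n, T_m) = 0. Moreover, the map θ : End_{R(Σ_n)}(γ_n) → End(T_n), sending φ to the natural endomorphism whose component at V is φ ⊗_{R(Σ_n)} id_{V^{⊗n}} under the canonical identification γ_n ⊗_{R(Σ_n)} V^{⊗n} ≅ V^{⊗n}, is an isomorphism of rings. -/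
open scoped TensorProduct
open PiTensorProduct

noncomputable section

universe u

variable (R : Type u) [CommRing R]

variable {n : ℕ} {A : Type u} [AddCommGroup A] [Module R A]

/-- The type of families of linear endomorphisms of `V^{⊗n}`, one for each `R`-module. -/
def TnEnd (n : ℕ) :=
  ∀ (V : Type u) [AddCommGroup V] [Module R V], (⨂[R]^n V) →ₗ[R] (⨂[R]^n V)

/-- Naturality for a family of endomorphisms of the functor `T_n : V ↦ V^{⊗n}`. -/
def IsNaturalT (n : ℕ) (η : TnEnd R n) : Prop :=
  ∀ (V W : Type u) [AddCommGroup V] [Module R V] [AddCommGroup W] [Module R W]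
    (f : V →ₗ[R] W), (η W) ∘ₗ (tmap R n f) = (tmap R n f) ∘ₗ (η V)

/-- An endomorphism of `V̄^{⊗n}` preserving a submodule `M` and commuting with the
letter-permutation action of `Σ_n` on it, i.e. an `R(Σ_n)`-endomorphism of `M`. -/
def IsEquivariant (b : Module.Basis (Fin n) R A) (M : Submodule R (⨂[R]^n A))
    (φ : ↥M →ₗ[R] ↥M) : Prop :=
  ∀ (σ : Equiv.Perm (Fin n)) (q : ↥M) (h : lact R b σ ↑q ∈ M),
    (↑(φ ⟨lact R b σ ↑q, h⟩) : ⨂[R]^n A) = lact R b σ ↑(φ q)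

/-- `CorrT φ η` says that the natural endomorphism `η` of `T_n` corresponds to the
`R(Σ_n)`-endomorphism `φ` of `γ_n`, i.e. that the component of `η` at `V` is
`φ ⊗_{R(Σ_n)} id_{V^{⊗n}}` under the canonical identification
`γ_n ⊗_{R(Σ_n)} V^{⊗n} ≅ V^{⊗n}`: equivalently (as expressed here), the component
of `η` at the free module `V̄` restricts to `φ` on `γ_n ⊆ V̄^{⊗n}`. -/
def CorrT (b : Module.Basis (Fin n) R A) (φ : ↥(gammaN R b) →ₗ[R] ↥(gammaN R b))
    (η : TnEnd R n) : Prop :=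
  ∀ q : ↥(gammaN R b), η A ↑q = ↑(φ q)


/-!
Let `E : V̄^{⊗n} → V̄^{⊗m}` commute with all `f^{⊗}` and expand `E(e_{v(1)} ⊗ ⋯ ⊗ e_{v(n)})` in
the basis of words. Naturality for the projection killing the letter `e_i` shows that every word
`u` occurring there uses exactly the letters of `v`; naturality for `e_i ↦ e_i + e_l`, with `l` a
letter not in `v`, shows that `u` repeats no letter when `v` does not. Since every
`x_1 ⊗ ⋯ ⊗ x_n` is the image of `e_1 ⊗ ⋯ ⊗ e_n` under a linear map, a natural transformation is
determined by its value there; for `n ≠ m` (working with one extra letter) that value is `0`.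
For `n = m` the same argument gives `η(γ_n) ⊆ γ_n`. Conversely `p = ∑ p_σ e_{σ(1)} ⊗ ⋯ ⊗ e_{σ(n)}`
in `γ_n` defines the natural endomorphism `x_1 ⊗ ⋯ ⊗ x_n ↦ ∑ p_σ x_{σ(1)} ⊗ ⋯ ⊗ x_{σ(n)}`
(this is `cpair p`), which for `p = φ(e_1 ⊗ ⋯ ⊗ e_n)` restricts to `φ` on `γ_n` by equivariance.
-/

open Module Function
open LinearMap (transvection)

section TensorPower

variable {R} {m : ℕ} {ι : Type*} {B : Type u} [AddCommGroup B] [Module R B]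

lemma tmap_tprod {V W : Type u} [AddCommGroup V] [Module R V] [AddCommGroup W] [Module R W]
    (f : V →ₗ[R] W) (x : Fin m → V) : tmap R m f (tprod R x) = tprod R fun j => f (x j) :=
  map_tprod _ _

lemma tmap_pact {V W : Type u} [AddCommGroup V] [Module R V] [AddCommGroup W] [Module R W]
    (f : V →ₗ[R] W) (σ : Equiv.Perm (Fin n)) (x : ⨂[R]^n V) :
    tmap R n f (pact R V n σ x) = pact R W n σ (tmap R n f x) :=
  map_reindex (fun _ => f) σ x

lemma pact_inv_tprod {V : Type u} [AddCommGroup V] [Module R V] (σ : Equiv.Perm (Fin n))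
    (x : Fin n → V) : pact R V n σ⁻¹ (tprod R x) = tprod R fun i => x (σ i) := by
  simp only [pact, LinearEquiv.coe_coe, reindex_tprod]
  rfl

def tensorPowBasis (c : Basis ι R B) (m : ℕ) : Basis (Fin m → ι) R (⨂[R]^m B) :=
  Basis.piTensorProduct fun _ => c

@[simp]
lemma tensorPowBasis_apply (c : Basis ι R B) (u : Fin m → ι) :
    tensorPowBasis c m u = tprod R fun j => c (u j) :=
  Basis.piTensorProduct_apply _ u

lemma tensorPowBasis_coord (c : Basis ι R B) (u : Fin m → ι) :
    (tensorPowBasis c m).coord u = dualDistrib (tprod R fun j => c.coord (u j)) := by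
  refine PiTensorProduct.ext (MultilinearMap.ext fun x => ?_)
  simp [tensorPowBasis]

lemma dualDistrib_tprod_comp_tmap {W : Type u} [AddCommGroup W] [Module R W]
    (φ : Fin m → Dual R W) (f : B →ₗ[R] W) :
    dualDistrib (tprod R φ) ∘ₗ tmap R m f = dualDistrib (tprod R fun j => φ j ∘ₗ f) :=
  PiTensorProduct.ext (MultilinearMap.ext fun x => by simp [tmap])

lemma dual_comp_transvection (g f : Dual R B) (v : B) :
    g ∘ₗ transvection f v = g + g v • f := by
  ext x
  simp [LinearMap.transvection.apply, mul_comm]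

lemma transvection_coord_basis [DecidableEq ι] (c : Basis ι R B) (i s : ι) (v : B) :
    transvection (c.coord i) v (c s) = c s + if s = i then v else 0 := by
  simp [LinearMap.transvection.apply, Finsupp.single_apply]

lemma coord_comp_tmap_transvection (c : Basis ι R B) (u : Fin m → ι) (i : ι) (v : B) :
    (tensorPowBasis c m).coord u ∘ₗ tmap R m (transvection (c.coord i) v) =
      dualDistrib (tprod R fun j => c.coord (u j) + c.coord (u j) v • c.coord i) := by
  simp only [tensorPowBasis_coord, dualDistrib_tprod_comp_tmap, dual_comp_transvection]

def eraseLetter (c : Basis ι R B) (i : ι) : B →ₗ[R] B := transvection (c.coord i) (-c i)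

def addLetter (c : Basis ι R B) (i l : ι) : B →ₗ[R] B := transvection (c.coord i) (c l)

lemma tmap_eraseLetter_tensorPowBasis [DecidableEq ι] (c : Basis ι R B) (i : ι)
    (w : Fin m → ι) :
    tmap R m (eraseLetter c i) (tensorPowBasis c m w) =
      if i ∈ Set.range w then 0 else tensorPowBasis c m w := by
  have hletter : ∀ s, eraseLetter c i (c s) = if s = i then 0 else c s := fun s => by
    rw [eraseLetter, transvection_coord_basis]
    split_ifs with h <;> simp [h]
  simp only [tensorPowBasis_apply, tmap_tprod, hletter]
  split_ifs with h
  · obtain ⟨j, rfl⟩ := h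
    exact MultilinearMap.map_coord_zero _ j (if_pos rfl)
  · exact congrArg _ (funext fun j => if_neg fun hj => h ⟨j, hj⟩)

lemma coord_tmap_eraseLetter [DecidableEq ι] (c : Basis ι R B) (i : ι) (u : Fin m → ι)
    (y : ⨂[R]^m B) :
    (tensorPowBasis c m).coord u (tmap R m (eraseLetter c i) y) =
      if i ∈ Set.range u then 0 else (tensorPowBasis c m).coord u y := by
  have hfactor : ∀ t, c.coord t + c.coord t (-c i) • c.coord i =
      if t = i then 0 else c.coord t := fun t => by
    rw [map_neg, c.coord_apply, c.repr_self, Finsupp.single_apply]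
    split_ifs <;> simp_all
    module
  rw [← LinearMap.comp_apply, eraseLetter, coord_comp_tmap_transvection]
  simp only [hfactor]
  split_ifs with h
  · obtain ⟨j, rfl⟩ := h
    rw [MultilinearMap.map_coord_zero _ j (if_pos rfl), map_zero, LinearMap.zero_apply]
  · rw [tensorPowBasis_coord]
    exact congrArg (fun φ => dualDistrib (PiTensorProduct.tprod R φ) y)
      (funext fun j => if_neg fun hj => h ⟨j, hj⟩)

lemma tmap_addLetter_tensorPowBasis (c : Basis ι R B) (l : ι) {w : Fin m → ι}
    (hw : Injective w) (p : Fin m) :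
    tmap R m (addLetter c (w p) l) (tensorPowBasis c m w) =
      tensorPowBasis c m w + tensorPowBasis c m (update w p l) := by
  classical
  have hletters : (fun j => addLetter c (w p) l (c (w j))) =
      update (fun j => c (w j)) p (c (w p) + c l) := by
    funext j
    rw [addLetter, transvection_coord_basis]
    rcases eq_or_ne j p with rfl | hj
    · simp
    · simp [hj, hw.ne hj]
  rw [tensorPowBasis_apply, tmap_tprod, hletters, MultilinearMap.map_update_add,
    update_eq_self, tensorPowBasis_apply]
  simp only [apply_update (fun _ => c)]

lemma coord_tmap_addLetter (c : Basis ι R B) (i l : ι) {u : Fin m → ι} {j₁ : Fin m}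
    (hj₁ : u j₁ = l) (hl : ∀ j ≠ j₁, u j ≠ l) (y : ⨂[R]^m B) :
    (tensorPowBasis c m).coord u (tmap R m (addLetter c i l) y) =
      (tensorPowBasis c m).coord u y + (tensorPowBasis c m).coord (update u j₁ i) y := by
  subst hj₁
  have hfactors : (fun j => c.coord (u j) + c.coord (u j) (c (u j₁)) • c.coord i) =
      update (fun j => c.coord (u j)) j₁ (c.coord (u j₁) + c.coord i) := by
    funext j
    rcases eq_or_ne j j₁ with rfl | hj
    · simp
    · simp [hj, hl j hj]
  rw [← LinearMap.comp_apply, addLetter, coord_comp_tmap_transvection, hfactors,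
    MultilinearMap.map_update_add, update_eq_self, map_add, LinearMap.add_apply,
    tensorPowBasis_coord, tensorPowBasis_coord]
  simp only [apply_update (fun _ => c.coord)]

section Commuting

variable (E : (⨂[R]^n B) →ₗ[R] (⨂[R]^m B))
  (hE : ∀ f : B →ₗ[R] B, E ∘ₗ tmap R n f = tmap R m f ∘ₗ E)
include hE

theorem range_eq_of_coord_ne_zero (c : Basis ι R B) {v : Fin n → ι} {u : Fin m → ι}
    (h : (tensorPowBasis c m).coord u (E (tensorPowBasis c n v)) ≠ 0) :
    Set.range u = Set.range v := by
  classical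
  ext i
  have key := congrArg ((tensorPowBasis c m).coord u)
    (LinearMap.congr_fun (hE (eraseLetter c i)) (tensorPowBasis c n v))
  simp only [LinearMap.comp_apply, tmap_eraseLetter_tensorPowBasis,
    coord_tmap_eraseLetter] at key
  split_ifs at key <;> simp_all

theorem coord_eq_zero_of_mem_range (c : Basis ι R B) {v : Fin n → ι} {u : Fin m → ι} {i : ι}
    (hu : i ∈ Set.range u) (hv : i ∉ Set.range v) :
    (tensorPowBasis c m).coord u (E (tensorPowBasis c n v)) = 0 := by
  by_contra h
  exact hv (range_eq_of_coord_ne_zero E hE c h ▸ hu)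

theorem injective_of_coord_ne_zero (c : Basis ι R B) {v : Fin n → ι} (hv : Injective v)
    {l : ι} (hl : l ∉ Set.range v) {u : Fin m → ι}
    (h : (tensorPowBasis c m).coord u (E (tensorPowBasis c n v)) ≠ 0) : Injective u := by
  classical
  have hrange := range_eq_of_coord_ne_zero E hE c h
  intro j₁ j₂ hu
  by_contra hj
  obtain ⟨p, hp⟩ : u j₁ ∈ Set.range v := hrange ▸ ⟨j₁, rfl⟩
  set u' := update u j₁ l
  have hu'ne : ∀ j ≠ j₁, u' j = u j := fun j hj' => update_of_ne hj' ..
  have hzero : (tensorPowBasis c m).coord u' (E (tensorPowBasis c n v)) = 0 :=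
    coord_eq_zero_of_mem_range E hE c ⟨j₁, update_self ..⟩ hl
  have hzero' :
      (tensorPowBasis c m).coord u' (E (tensorPowBasis c n (update v p l))) = 0 := by
    refine coord_eq_zero_of_mem_range E hE c (i := v p)
      ⟨j₂, by rw [hu'ne j₂ (Ne.symm hj), ← hu, hp]⟩ ?_
    rintro ⟨q, hq⟩
    rcases eq_or_ne q p with rfl | hqp
    · exact hl ⟨q, by rw [update_self] at hq; exact hq.symm⟩
    · exact hqp (hv (by rwa [update_of_ne hqp] at hq))
  have hl_once : ∀ j ≠ j₁, u' j ≠ l := fun j hj' hjl =>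
    hl (hrange ▸ ⟨j, (hu'ne j hj').symm.trans hjl⟩)
  -- Naturality for `e_{v p} ↦ e_{v p} + e_l`, read at the coefficient of `u'`:
  -- the left side gives `0 + 0`, the right side `0 + (coefficient of u)`.
  have key := congrArg ((tensorPowBasis c m).coord u')
    (LinearMap.congr_fun (hE (addLetter c (v p) l)) (tensorPowBasis c n v))
  rw [LinearMap.comp_apply, LinearMap.comp_apply, tmap_addLetter_tensorPowBasis c l hv,
    map_add, map_add, hzero, hzero', coord_tmap_addLetter c _ _ (update_self ..) hl_once,
    hzero, update_idem, hp, update_eq_self, zero_add, zero_add] at key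
  exact h key.symm

end Commuting

def IsNaturalHom
    (η : ∀ (V : Type u) [AddCommGroup V] [Module R V], (⨂[R]^n V) →ₗ[R] (⨂[R]^m V)) : Prop :=
  ∀ (V W : Type u) [AddCommGroup V] [Module R V] [AddCommGroup W] [Module R W]
    (f : V →ₗ[R] W), (η W) ∘ₗ (tmap R n f) = (tmap R m f) ∘ₗ (η V)

namespace IsNaturalHom

variable {η η' : ∀ (V : Type u) [AddCommGroup V] [Module R V], (⨂[R]^n V) →ₗ[R] (⨂[R]^m V)}

theorem apply_tprod (hη : IsNaturalHom η) (c : Basis ι R B) {v : Fin n → ι}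
    (hv : Injective v) {V : Type u} [AddCommGroup V] [Module R V] (x : Fin n → V) :
    η V (tprod R x) = tmap R m (c.constr R (extend v x 0)) (η B (tensorPowBasis c n v)) := by
  have hword : tmap R n (c.constr R (extend v x 0)) (tensorPowBasis c n v) = tprod R x := by
    simp [tmap_tprod, hv.extend_apply]
  rw [← hword, ← LinearMap.comp_apply, hη, LinearMap.comp_apply]

theorem ext (hη : IsNaturalHom η) (hη' : IsNaturalHom η') (c : Basis ι R B) {v : Fin n → ι}
    (hv : Injective v) (h : η B (tensorPowBasis c n v) = η' B (tensorPowBasis c n v))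
    (V : Type u) [AddCommGroup V] [Module R V] : η V = η' V :=
  PiTensorProduct.ext (MultilinearMap.ext fun x => by
    simp only [LinearMap.compMultilinearMap_apply, hη.apply_tprod c hv, hη'.apply_tprod c hv, h])

theorem eq_zero_of_ne (hη : IsNaturalHom η) (hnm : n ≠ m)
    (V : Type u) [AddCommGroup V] [Module R V] : η V = 0 := by
  let c := Pi.basisFun R (Fin (n + 1))
  have hv : Injective (Fin.castSucc : Fin n → Fin (n + 1)) := Fin.castSucc_injective n
  have hfresh : Fin.last n ∉ Set.range (Fin.castSucc : Fin n → Fin (n + 1)) := by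
    simp [Fin.range_castSucc]
  have hword : η _ (tensorPowBasis c n Fin.castSucc) = 0 := by
    refine (tensorPowBasis c m).forall_coord_eq_zero_iff.mp fun u => ?_
    by_contra h
    have hinj := injective_of_coord_ne_zero (η _) (hη _ _) c hv hfresh h
    have hrange := range_eq_of_coord_ne_zero (η _) (hη _ _) c h
    exact hnm (Fin.equiv_iff_eq.mp ⟨((Equiv.ofInjective u hinj).trans
      (Equiv.setCongr hrange)).trans (Equiv.ofInjective _ hv).symm⟩).symm
  exact hη.ext (η' := fun _ _ _ => 0) (fun _ _ _ _ _ _ _ => by simp) c hv hword V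

end IsNaturalHom

section Gamma

variable (b : Basis (Fin n) R A)

lemma eword_eq_tensorPowBasis (σ : Equiv.Perm (Fin n)) :
    eword R b σ = tensorPowBasis b n σ := by
  simp [eword]

lemma lamb_eq_coord (w : Fin n → Fin n) : lamb R b w = (tensorPowBasis b n).coord w :=
  PiTensorProduct.ext (MultilinearMap.ext fun x => by simp [lamb, tensorPowBasis_coord])

lemma eword_mem_gammaN (σ : Equiv.Perm (Fin n)) : eword R b σ ∈ gammaN R b :=
  Submodule.subset_span ⟨σ, rfl⟩

lemma mem_gammaN_iff {x : ⨂[R]^n A} :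
    x ∈ gammaN R b ↔ ∀ u, (tensorPowBasis b n).repr x u ≠ 0 → Bijective u := by
  have hspan : gammaN R b = Submodule.span R (tensorPowBasis b n '' {u | Bijective u}) := by
    refine congrArg _ (Set.ext fun y => ⟨?_, ?_⟩)
    · rintro ⟨σ, rfl⟩
      exact ⟨σ, σ.bijective, (eword_eq_tensorPowBasis b σ).symm⟩
    · rintro ⟨u, hu, rfl⟩
      exact ⟨Equiv.ofBijective u hu, eword_eq_tensorPowBasis b _⟩
  rw [hspan, Basis.mem_span_image]
  exact ⟨fun h u hu => h (Finsupp.mem_support_iff.mpr hu), fun h u hu =>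
    h u (Finsupp.mem_support_iff.mp hu)⟩

lemma map_mem_gammaN (E : (⨂[R]^n A) →ₗ[R] (⨂[R]^n A))
    (hE : ∀ f : A →ₗ[R] A, E ∘ₗ tmap R n f = tmap R n f ∘ₗ E) {x : ⨂[R]^n A}
    (hx : x ∈ gammaN R b) : E x ∈ gammaN R b := by
  refine (Submodule.span_le (p := (gammaN R b).comap E)).mpr ?_ hx
  rintro _ ⟨σ, rfl⟩
  refine (mem_gammaN_iff b).mpr fun u hu => ?_
  rw [eword_eq_tensorPowBasis] at hu
  have hsurj : Surjective u := by
    rw [← Set.range_eq_univ, range_eq_of_coord_ne_zero E hE b hu, Set.range_eq_univ]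
    exact σ.surjective
  exact ⟨Finite.injective_iff_surjective.mpr hsurj, hsurj⟩

lemma cpair_apply {V : Type u} [AddCommGroup V] [Module R V] (p : ⨂[R]^n A)
    (x : ⨂[R]^n V) :
    cpair R b V p x = ∑ σ : Equiv.Perm (Fin n), lamb R b σ p • pact R V n σ⁻¹ x := by
  simp [cpair]

lemma cpair_tprod_eq_tmap {V : Type u} [AddCommGroup V] [Module R V] {p : ⨂[R]^n A}
    (hp : p ∈ gammaN R b) (f : A →ₗ[R] V) :
    cpair R b V p (tprod R fun i => f (b i)) = tmap R n f p := by
  refine LinearMap.eqOn_span' (f := (cpair R b V).flip (tprod R fun i => f (b i)))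
    (g := tmap R n f) ?_ hp
  rintro _ ⟨τ, rfl⟩
  have hcoeff : ∀ σ : Equiv.Perm (Fin n), lamb R b σ (eword R b τ) = if τ = σ then 1 else 0 := by
    intro σ
    rw [lamb_eq_coord, eword_eq_tensorPowBasis, Basis.coord_apply, Basis.repr_self,
      Finsupp.single_apply]
    simp only [DFunLike.coe_fn_eq]
  rw [LinearMap.flip_apply, cpair_apply]
  simp only [hcoeff, ite_smul, one_smul, zero_smul, Finset.sum_ite_eq, Finset.mem_univ, if_true]
  simp [pact_inv_tprod, eword, tmap_tprod]

lemma isNaturalT_cpair (p : ⨂[R]^n A) : IsNaturalT R n fun V _ _ => cpair R b V p := by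
  intro V W _ _ _ _ f
  ext x
  simp [cpair_apply, tmap_pact]

theorem existsUnique_isNaturalT_corrT (φ : gammaN R b →ₗ[R] gammaN R b)
    (hφ : IsEquivariant R b (gammaN R b) φ) :
    ∃! η : TnEnd R n, IsNaturalT R n η ∧ CorrT R b φ η := by
  have h1 : eword R b 1 ∈ gammaN R b := eword_mem_gammaN b 1
  set p : ⨂[R]^n A := ↑(φ ⟨eword R b 1, h1⟩) with hp_def
  have hp : p ∈ gammaN R b := (φ _).2
  refine ⟨fun V _ _ => cpair R b V p, ⟨isNaturalT_cpair b p, ?_⟩, ?_⟩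
  · suffices cpair R b A p ∘ₗ (gammaN R b).subtype = (gammaN R b).subtype ∘ₗ φ from
      fun q => LinearMap.congr_fun this q
    refine LinearMap.ext_on Submodule.span_span_coe_preimage ?_
    rintro ⟨_, hq⟩ ⟨τ, rfl⟩
    have hlact : lact R b τ (eword R b 1) = eword R b τ := by simp [lact, eword, tmap_tprod]
    calc cpair R b A p (eword R b τ) = lact R b τ p := by
          have h := cpair_tprod_eq_tmap b hp (b.equiv b (τ : Fin n ≃ Fin n)).toLinearMap
          simp only [LinearEquiv.coe_coe, Basis.equiv_apply] at h
          exact h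
      _ = φ ⟨eword R b τ, hq⟩ := by
          rw [hp_def, ← hφ τ ⟨eword R b 1, h1⟩ (hlact ▸ hq)]
          simp only [hlact]
  · rintro η ⟨hη, hcorr⟩
    funext V _ _
    refine IsNaturalHom.ext hη (isNaturalT_cpair b p) b injective_id ?_ V
    have hword : tensorPowBasis b n id = eword R b 1 := (eword_eq_tensorPowBasis b 1).symm
    have hid := cpair_tprod_eq_tmap b hp LinearMap.id
    rw [tmap, PiTensorProduct.map_id, LinearMap.id_apply] at hid
    rw [hword, hcorr ⟨_, h1⟩]
    exact hid.symm

theorem existsUnique_isEquivariant_corrT (η : TnEnd R n) (hη : IsNaturalT R n η) :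
    ∃! φ : gammaN R b →ₗ[R] gammaN R b, IsEquivariant R b (gammaN R b) φ ∧ CorrT R b φ η := by
  have hpres : ∀ x ∈ gammaN R b, η A x ∈ gammaN R b :=
    fun _ hx => map_mem_gammaN b (η A) (hη A A) hx
  refine ⟨(η A).restrict hpres, ⟨fun σ q _ => ?_, fun _ => rfl⟩, ?_⟩
  · exact LinearMap.congr_fun (hη A A (b.equiv b (σ : Fin n ≃ Fin n)).toLinearMap) q
  · rintro φ ⟨-, hcorr⟩
    ext q
    exact (hcorr q).symm

end Gamma

end TensorPower

theorem statement8_general (R : Type u) [CommRing R] (n m : ℕ)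
    (A : Type u) [AddCommGroup A] [Module R A] (b : Module.Basis (Fin n) R A) :
    (n ≠ m → ∀ (η : ∀ (V : Type u) [AddCommGroup V] [Module R V],
        (⨂[R]^n V) →ₗ[R] (⨂[R]^m V)),
      (∀ (V W : Type u) [AddCommGroup V] [Module R V] [AddCommGroup W] [Module R W]
        (f : V →ₗ[R] W), (η W) ∘ₗ (tmap R n f) = (tmap R m f) ∘ₗ (η V)) →
      ∀ (V : Type u) [AddCommGroup V] [Module R V] (x : ⨂[R]^n V), η V x = 0) ∧
    (∀ φ : ↥(gammaN R b) →ₗ[R] ↥(gammaN R b), IsEquivariant R b (gammaN R b) φ →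
      ∃! η : TnEnd R n, IsNaturalT R n η ∧ CorrT R b φ η) ∧
    (∀ η : TnEnd R n, IsNaturalT R n η →
      ∃! φ : ↥(gammaN R b) →ₗ[R] ↥(gammaN R b),
        IsEquivariant R b (gammaN R b) φ ∧ CorrT R b φ η) ∧
    (∀ (φ φ' : ↥(gammaN R b) →ₗ[R] ↥(gammaN R b)) (η η' : TnEnd R n),
      CorrT R b φ η → CorrT R b φ' η' →
        CorrT R b (φ ∘ₗ φ') (fun V _ _ => (η V) ∘ₗ (η' V)) ∧
        CorrT R b (φ + φ') (fun V _ _ => η V + η' V)) ∧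
    CorrT R b LinearMap.id (fun V _ _ => LinearMap.id) := by
  refine ⟨fun hnm η hη V _ _ x => ?_, existsUnique_isNaturalT_corrT b,
    existsUnique_isEquivariant_corrT b, fun φ φ' η η' h h' => ⟨fun q => ?_, fun q => ?_⟩,
    fun _ => rfl⟩
  · rw [IsNaturalHom.eq_zero_of_ne hη hnm V, LinearMap.zero_apply]
  · simp only [LinearMap.comp_apply, h' q, h (φ' q)]
  · simp only [LinearMap.add_apply, h q, h' q, Submodule.coe_add]

/-- If `n ≠ m` then every natural transformation with `R`-linear
components from `T_n : V ↦ V^{⊗n}` to `T_m : V ↦ V^{⊗m}` is zero; moreover the map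
`θ : End_{R(Σ_n)}(γ_n) → End(T_n)`, sending `φ` to the natural endomorphism whose
component at `V` is `φ ⊗_{R(Σ_n)} id` under the canonical identification
`γ_n ⊗_{R(Σ_n)} V^{⊗n} ≅ V^{⊗n}`, is an isomorphism of rings. -/
theorem statement8 (R : Type u) [CommRing R] (n m : ℕ) (hn : 1 ≤ n) (hm : 1 ≤ m)
    (A : Type u) [AddCommGroup A] [Module R A] (b : Module.Basis (Fin n) R A) :
    (n ≠ m → ∀ (η : ∀ (V : Type u) [AddCommGroup V] [Module R V],
        (⨂[R]^n V) →ₗ[R] (⨂[R]^m V)),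
      (∀ (V W : Type u) [AddCommGroup V] [Module R V] [AddCommGroup W] [Module R W]
        (f : V →ₗ[R] W), (η W) ∘ₗ (tmap R n f) = (tmap R m f) ∘ₗ (η V)) →
      ∀ (V : Type u) [AddCommGroup V] [Module R V] (x : ⨂[R]^n V), η V x = 0) ∧
    (∀ φ : ↥(gammaN R b) →ₗ[R] ↥(gammaN R b), IsEquivariant R b (gammaN R b) φ →
      ∃! η : TnEnd R n, IsNaturalT R n η ∧ CorrT R b φ η) ∧
    (∀ η : TnEnd R n, IsNaturalT R n η →
      ∃! φ : ↥(gammaN R b) →ₗ[R] ↥(gammaN R b),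
        IsEquivariant R b (gammaN R b) φ ∧ CorrT R b φ η) ∧
    (∀ (φ φ' : ↥(gammaN R b) →ₗ[R] ↥(gammaN R b)) (η η' : TnEnd R n),
      CorrT R b φ η → CorrT R b φ' η' →
        CorrT R b (φ ∘ₗ φ') (fun V _ _ => (η V) ∘ₗ (η' V)) ∧
        CorrT R b (φ + φ') (fun V _ _ => η V + η' V)) ∧
    CorrT R b LinearMap.id (fun V _ _ => LinearMap.id) :=
  statement8_general R n m A b
end
end
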